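/- The polynomial P₁(x,y,z) = (xyz − z + y + x)² ∈ ℝ[x,y,z] is extremal in Q_P(2,2,2): whenever P₁ = g + h with g, h ∈ Q_P(2,2,2), there exists a real constant c ≥ 0 with g = c·P₁. -/

import Mathlib

open MvPolynomial

noncomputable section

/-- `Q_P(2,2,2)`: real polynomials in `x,y,z` expressible as finite sums `∑ gⱼ²` with each
`gⱼ` of degree at most `1` in each of the variables. -/
def QP222 : Set (MvPolynomial (Fin 3) ℝ) :=
  { p | ∃ (r : ℕ) (g : Fin r → MvPolynomial (Fin 3) ℝ),
      (∀ j, (g j).degreeOf 0 ≤ 1 ∧ (g j).degreeOf 1 ≤ 1 ∧ (g j).degreeOf 2 ≤ 1) ∧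
      p = ∑ j, (g j) ^ 2 }

/-!
Write `P₁ = f²` with `f = xyz − z + y + x`. If `P₁ = ∑ gⱼ² + ∑ hₖ²`, then every `gⱼ` vanishes on
the real zero set of `f`. A polynomial of degree at most one in each variable has eight
coefficients, and vanishing at seven suitable zeros of `f` already forces it to be a multiple of
`f`; hence `∑ gⱼ² = (∑ cⱼ²) f²`.
-/

section SumOfSquares

variable {σ R ι κ : Type*} [CommRing R] [LinearOrder R] [IsStrictOrderedRing R]
  [Fintype ι] [Fintype κ]

theorem eval_eq_zero_of_eval_sum_sq_add_sum_sq_eq_zero (g : ι → MvPolynomial σ R)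
    (h : κ → MvPolynomial σ R) (x : σ → R)
    (hx : eval x (∑ j, g j ^ 2 + ∑ k, h k ^ 2) = 0) (j : ι) : eval x (g j) = 0 := by
  simp only [map_add, map_sum, map_pow] at hx
  have hg : ∑ j, eval x (g j) ^ 2 = 0 :=
    ((add_eq_zero_iff_of_nonneg (Finset.sum_nonneg fun _ _ ↦ sq_nonneg _)
      (Finset.sum_nonneg fun _ _ ↦ sq_nonneg _)).mp hx).1
  exact pow_eq_zero_iff two_ne_zero |>.mp <|
    (Finset.sum_eq_zero_iff_of_nonneg fun _ _ ↦ sq_nonneg _).mp hg j (Finset.mem_univ j)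

end SumOfSquares

section Multilinear

open Finsupp

def exponent3 (i j k : ℕ) : Fin 3 →₀ ℕ := single 0 i + single 1 j + single 2 k

@[simp] theorem exponent3_apply_zero (i j k : ℕ) : exponent3 i j k 0 = i := by
  simp [exponent3]

@[simp] theorem exponent3_apply_one (i j k : ℕ) : exponent3 i j k 1 = j := by
  simp [exponent3]

@[simp] theorem exponent3_apply_two (i j k : ℕ) : exponent3 i j k 2 = k := by
  simp [exponent3]

theorem exponent3_inj {i j k i' j' k' : ℕ} :
    exponent3 i j k = exponent3 i' j' k' ↔ i = i' ∧ j = j' ∧ k = k' := by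
  constructor
  · intro h
    exact ⟨by simpa using congr($h 0), by simpa using congr($h 1), by simpa using congr($h 2)⟩
  · rintro ⟨rfl, rfl, rfl⟩
    rfl

theorem eq_exponent3_apply (m : Fin 3 →₀ ℕ) : m = exponent3 (m 0) (m 1) (m 2) := by
  ext i
  fin_cases i <;> simp

variable {R : Type*} [CommSemiring R]

theorem monomial_exponent3 (i j k : ℕ) (a : R) :
    monomial (exponent3 i j k) a = C a * X 0 ^ i * X 1 ^ j * X 2 ^ k := by
  simp [exponent3, X_pow_eq_monomial, monomial_mul, C_mul_monomial, add_assoc]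

theorem support_subset_of_degreeOf_le_one {g : MvPolynomial (Fin 3) R}
    (h₀ : g.degreeOf 0 ≤ 1) (h₁ : g.degreeOf 1 ≤ 1) (h₂ : g.degreeOf 2 ≤ 1) :
    g.support ⊆ {exponent3 0 0 0, exponent3 1 0 0, exponent3 0 1 0, exponent3 0 0 1,
      exponent3 1 1 0, exponent3 1 0 1, exponent3 0 1 1, exponent3 1 1 1} := by
  intro m hm
  have hm₀ : m 0 ≤ 1 := degreeOf_le_iff.mp h₀ m hm
  have hm₁ : m 1 ≤ 1 := degreeOf_le_iff.mp h₁ m hm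
  have hm₂ : m 2 ≤ 1 := degreeOf_le_iff.mp h₂ m hm
  rw [eq_exponent3_apply m]
  interval_cases m 0 <;> interval_cases m 1 <;> interval_cases m 2 <;> simp

theorem eq_multilinear_of_degreeOf_le_one {g : MvPolynomial (Fin 3) R}
    (h₀ : g.degreeOf 0 ≤ 1) (h₁ : g.degreeOf 1 ≤ 1) (h₂ : g.degreeOf 2 ≤ 1) :
    g = C (coeff (exponent3 0 0 0) g) + C (coeff (exponent3 1 0 0) g) * X 0
      + C (coeff (exponent3 0 1 0) g) * X 1 + C (coeff (exponent3 0 0 1) g) * X 2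
      + C (coeff (exponent3 1 1 0) g) * X 0 * X 1 + C (coeff (exponent3 1 0 1) g) * X 0 * X 2
      + C (coeff (exponent3 0 1 1) g) * X 1 * X 2
      + C (coeff (exponent3 1 1 1) g) * X 0 * X 1 * X 2 := by
  classical
  conv_lhs => rw [as_sum g, Finset.sum_subset (support_subset_of_degreeOf_le_one h₀ h₁ h₂)
    fun m _ hm ↦ by rw [MvPolynomial.notMem_support_iff.mp hm, monomial_zero]]
  simp only [Finset.mem_insert, exponent3_inj, zero_ne_one, one_ne_zero, and_self, and_true,
    and_false, Finset.mem_singleton, or_self, not_false_eq_true, Finset.sum_insert,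
    monomial_exponent3, pow_zero, mul_one, pow_one, Finset.sum_singleton]
  ring

end Multilinear

section Extremal

variable {R : Type*} [Field R] [LinearOrder R] [IsStrictOrderedRing R]

/-- Seven zeros of `f = xyz − z + y + x` suffice: on the eight-dimensional space of polynomials
of degree at most one in each variable, evaluation at them cuts out the line spanned by `f`. -/
theorem exists_eq_C_mul_of_eval_eq_zero {g : MvPolynomial (Fin 3) R}
    (h₀ : g.degreeOf 0 ≤ 1) (h₁ : g.degreeOf 1 ≤ 1) (h₂ : g.degreeOf 2 ≤ 1)
    (hg : ∀ x : Fin 3 → R, eval x (X 0 * X 1 * X 2 - X 2 + X 1 + X 0) = 0 → eval x g = 0) :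
    ∃ c, g = C c * (X 0 * X 1 * X 2 - X 2 + X 1 + X 0) := by
  have hv (a b c : R) (habc : a * b * c - c + b + a = 0) : eval ![a, b, c] g = 0 :=
    hg _ (by simpa using habc)
  have v₀ := hv 0 0 0 (by norm_num)
  have v₁ := hv 1 0 1 (by norm_num)
  have v₂ := hv 0 1 1 (by norm_num)
  have v₃ := hv 2 0 2 (by norm_num)
  have v₄ := hv 0 2 2 (by norm_num)
  have v₅ := hv 1 2 (-3) (by norm_num)
  have v₆ := hv 3 1 (-2) (by norm_num)
  have hform := eq_multilinear_of_degreeOf_le_one h₀ h₁ h₂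
  set c₀ := coeff (exponent3 0 0 0) g
  set c₁ := coeff (exponent3 1 0 0) g
  set c₂ := coeff (exponent3 0 1 0) g
  set c₃ := coeff (exponent3 0 0 1) g
  set c₀₁ := coeff (exponent3 1 1 0) g
  set c₀₂ := coeff (exponent3 1 0 1) g
  set c₁₂ := coeff (exponent3 0 1 1) g
  set c₀₁₂ := coeff (exponent3 1 1 1) g
  rw [hform] at v₀ v₁ v₂ v₃ v₄ v₅ v₆ ⊢
  simp only [map_add, map_mul, eval_C, eval_X, Matrix.cons_val_zero, Matrix.cons_val_one,
    Matrix.cons_val_two, Matrix.head_cons, Matrix.tail_cons] at v₀ v₁ v₂ v₃ v₄ v₅ v₆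
  refine ⟨c₀₁₂, ?_⟩
  rw [show c₀ = 0 by linarith, show c₀₁ = 0 by linarith, show c₀₂ = 0 by linarith,
    show c₁₂ = 0 by linarith, show c₁ = c₀₁₂ by linarith, show c₂ = c₀₁₂ by linarith,
    show c₃ = -c₀₁₂ by linarith, map_zero, map_neg]
  ring

end Extremal

theorem P1_extremal_in_QP (P₁ : MvPolynomial (Fin 3) ℝ)
    (hP₁ : P₁ = (X 0 * X 1 * X 2 - X 2 + X 1 + X 0) ^ 2) :
    ∀ g h : MvPolynomial (Fin 3) ℝ, g ∈ QP222 → h ∈ QP222 → P₁ = g + h →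
      ∃ c : ℝ, 0 ≤ c ∧ g = C c * P₁ := by
  rintro _ _ ⟨r, g, hdeg, rfl⟩ ⟨s, h, -, rfl⟩ hsum
  subst hP₁
  have hvanish (j : Fin r) (x : Fin 3 → ℝ)
      (hx : eval x (X 0 * X 1 * X 2 - X 2 + X 1 + X 0) = 0) : eval x (g j) = 0 :=
    eval_eq_zero_of_eval_sum_sq_add_sum_sq_eq_zero g h x (by rw [← hsum, map_pow, hx]; ring) j
  choose c hc using fun j ↦
    exists_eq_C_mul_of_eval_eq_zero (hdeg j).1 (hdeg j).2.1 (hdeg j).2.2 (hvanish j)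
  refine ⟨∑ j, c j ^ 2, Finset.sum_nonneg fun j _ ↦ sq_nonneg (c j), ?_⟩
  simp only [hc, mul_pow, ← map_pow, ← Finset.sum_mul, ← map_sum]
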